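/- arXiv:2209.07513 — 7 statements merged into one kernel-verified Lean document; each statement's English description precedes it below -/
import Mathlib

section
/- Let g : ℝ → ℝ be continuous, let I ⊆ ℝ be a compact nonempty interval, and let ε > 0. Then there exists a finite collection of pairwise disjoint closed intervals whose union contains the set I ∩ {x : g(x) ≥ ε} and is contained in the set I ∩ {x : g(x) ≥ 0}. -/
/-!
The compact set `[a, b] ∩ {ε ≤ g}` lies in the open set `{0 < g}`, so finitely many closed
intervals inside `{0 < g}` cover it; clip them to `[a, b]`. Two of these intervals that meet may
be replaced by their convex hull, which is their union, so repeating this until none meet yields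
a disjoint family with the same union.
-/

open Set

theorem exists_pairwiseDisjoint_Icc_biUnion_eq {α : Type*} [LinearOrder α]
    (F : Finset (α × α)) :
    ∃ G : Finset (α × α), (G : Set (α × α)).PairwiseDisjoint (fun p => Icc p.1 p.2) ∧
      ⋃ p ∈ G, Icc p.1 p.2 = ⋃ p ∈ F, Icc p.1 p.2 := by
  induction hF : F.card using Nat.strong_induction_on generalizing F with
  | _ n ih =>
  by_cases hdisj : (F : Set (α × α)).PairwiseDisjoint (fun p => Icc p.1 p.2)
  · exact ⟨F, hdisj, rfl⟩
  obtain ⟨p, hp, q, hq, hpq, hmeet⟩ :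
      ∃ p ∈ F, ∃ q ∈ F, p ≠ q ∧ ¬Disjoint (Icc p.1 p.2) (Icc q.1 q.2) := by
    simpa [PairwiseDisjoint, Set.Pairwise] using hdisj
  obtain ⟨x, ⟨hpx, hxp⟩, hqx, hxq⟩ := not_disjoint_iff.mp hmeet
  set F' := insert (min p.1 q.1, max p.2 q.2) ((F.erase p).erase q)
  have hcard : F'.card < n := by
    have : F'.card ≤ _ := Finset.card_insert_le _ _
    have := Finset.card_erase_of_mem (Finset.mem_erase.mpr ⟨hpq.symm, hq⟩)
    have := Finset.card_erase_of_mem hp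
    have := Finset.card_pos.mpr ⟨q, Finset.mem_erase.mpr ⟨hpq.symm, hq⟩⟩
    omega
  obtain ⟨G, hG, hGF'⟩ := ih _ hcard F' rfl
  refine ⟨G, hG, hGF'.trans ?_⟩
  have hF : F = insert p (insert q ((F.erase p).erase q)) := by
    rw [Finset.insert_erase (Finset.mem_erase.mpr ⟨hpq.symm, hq⟩), Finset.insert_erase hp]
  conv_rhs => rw [hF]
  simp only [F', Finset.set_biUnion_insert, union_assoc,
    ← Icc_union_Icc' (hqx.trans hxp) (hpx.trans hxq)]

theorem IsCompact.exists_finset_Icc_cover {K U : Set ℝ} (hK : IsCompact K) (hU : IsOpen U)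
    (hKU : K ⊆ U) :
    ∃ F : Finset (ℝ × ℝ), K ⊆ ⋃ p ∈ F, Icc p.1 p.2 ∧ ⋃ p ∈ F, Icc p.1 p.2 ⊆ U := by
  have hcover : K ⊆ ⋃ p ∈ {p : ℝ × ℝ | Icc p.1 p.2 ⊆ U}, Ioo p.1 p.2 := by
    intro x hx
    obtain ⟨r, hr, hball⟩ := Metric.isOpen_iff.mp hU x (hKU hx)
    refine mem_biUnion (x := (x - r / 2, x + r / 2)) ?_ ⟨by linarith, by linarith⟩
    have hIcc : Icc (x - r / 2) (x + r / 2) ⊆ Ioo (x - r) (x + r) :=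
      Icc_subset_Ioo (by linarith) (by linarith)
    exact hIcc.trans (by simpa only [Real.ball_eq_Ioo] using hball)
  obtain ⟨B, hBU, hBfin, hKB⟩ :=
    hK.elim_finite_subcover_image (fun _ _ => isOpen_Ioo) hcover
  refine ⟨hBfin.toFinset, ?_, ?_⟩
  · simpa only [Finite.mem_toFinset] using
      hKB.trans (biUnion_mono subset_rfl fun _ _ => Ioo_subset_Icc_self)
  · simp only [Finite.mem_toFinset, iUnion_subset_iff]
    exact fun p hp => hBU hp

theorem biUnion_image_Icc_max_min {α : Type*} [LinearOrder α]
    (F : Finset (α × α)) (a b : α) :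
    ⋃ p ∈ F.image (fun p => (max p.1 a, min p.2 b)), Icc p.1 p.2 =
      (⋃ p ∈ F, Icc p.1 p.2) ∩ Icc a b := by
  simp only [Finset.set_biUnion_finset_image, iUnion_inter, Icc_inter_Icc]

theorem exists_fin_Icc_of_pairwiseDisjoint {α : Type*} [LinearOrder α]
    (G : Finset (α × α)) (hG : (G : Set (α × α)).PairwiseDisjoint (fun p => Icc p.1 p.2)) :
    ∃ (n : ℕ) (c d : Fin n → α), (∀ i, c i ≤ d i) ∧
      (∀ i j, i ≠ j → Disjoint (Icc (c i) (d i)) (Icc (c j) (d j))) ∧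
      ⋃ i, Icc (c i) (d i) = ⋃ p ∈ G, Icc p.1 p.2 := by
  set G' := G.filter (fun p => p.1 ≤ p.2)
  let e := G'.equivFin
  refine ⟨G'.card, fun i => (e.symm i).1.1, fun i => (e.symm i).1.2,
    fun i => (Finset.mem_filter.mp (e.symm i).2).2, fun i j hij => ?_, ?_⟩
  · exact hG (Finset.mem_filter.mp (e.symm i).2).1 (Finset.mem_filter.mp (e.symm j).2).1
      (fun h => hij (e.symm.injective (Subtype.ext h)))
  · rw [e.symm.surjective.iUnion_comp (fun x : G' => Icc x.1.1 x.1.2), iUnion_subtype]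
    ext x
    simp only [mem_iUnion, Finset.mem_filter, G', exists_prop]
    constructor
    · rintro ⟨p, ⟨hp, -⟩, hx⟩; exact ⟨p, hp, hx⟩
    · rintro ⟨p, hp, hx⟩; exact ⟨p, ⟨hp, hx.1.trans hx.2⟩, hx⟩

theorem cover_superlevel_by_intervals_general (g : ℝ → ℝ) (hg : Continuous g)
    (a b : ℝ) (ε : ℝ) (hε : 0 < ε) :
    ∃ (n : ℕ) (c d : Fin n → ℝ),
      (∀ i, c i ≤ d i) ∧
      (∀ i j, i ≠ j → Disjoint (Set.Icc (c i) (d i)) (Set.Icc (c j) (d j))) ∧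
      (Set.Icc a b ∩ {x | ε ≤ g x} ⊆ ⋃ i, Set.Icc (c i) (d i)) ∧
      (⋃ i, Set.Icc (c i) (d i)) ⊆ Set.Icc a b ∩ {x | 0 ≤ g x} := by
  obtain ⟨F, hKF, hFU⟩ :=
    (isCompact_Icc.inter_right (isClosed_le continuous_const hg)).exists_finset_Icc_cover
      (isOpen_lt continuous_const hg) (fun x hx => hε.trans_le hx.2)
  obtain ⟨G, hG, hGF⟩ :=
    exists_pairwiseDisjoint_Icc_biUnion_eq (F.image fun p => (max p.1 a, min p.2 b))
  obtain ⟨n, c, d, hcd, hdisj, hcG⟩ := exists_fin_Icc_of_pairwiseDisjoint G hG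
  refine ⟨n, c, d, hcd, hdisj, ?_, ?_⟩ <;> rw [hcG, hGF, biUnion_image_Icc_max_min]
  · exact fun x hx => ⟨hKF hx, hx.1⟩
  · exact fun x hx => ⟨hx.2, (show 0 < g x from hFU hx.1).le⟩

theorem cover_superlevel_by_intervals (g : ℝ → ℝ) (hg : Continuous g)
    (a b : ℝ) (hab : a ≤ b) (ε : ℝ) (hε : 0 < ε) :
    ∃ (n : ℕ) (c d : Fin n → ℝ),
      (∀ i, c i ≤ d i) ∧
      (∀ i j, i ≠ j → Disjoint (Set.Icc (c i) (d i)) (Set.Icc (c j) (d j))) ∧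
      (Set.Icc a b ∩ {x | ε ≤ g x} ⊆ ⋃ i, Set.Icc (c i) (d i)) ∧
      (⋃ i, Set.Icc (c i) (d i)) ⊆ Set.Icc a b ∩ {x | 0 ≤ g x} :=
  cover_superlevel_by_intervals_general g hg a b ε hε
end

section
/- Let f : ℝ → ℝ be continuously differentiable with 1-Lipschitz derivative f', let ε > 0, and let x_- < x_+ be real numbers with f'(x_-) ≤ -ε and f(x_+) ≥ f(x_-). Then x_+ - x_- ≥ ε. -/
theorem binary_search_iii_gap (f : ℝ → ℝ) (hf : ContDiff ℝ 1 f)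
    (hlip : LipschitzWith 1 (deriv f)) (ε : ℝ) (hε : 0 < ε)
    (xm xp : ℝ) (hx : xm < xp) (h₀ : deriv f xm ≤ -ε) (h₁ : f xm ≤ f xp) :
    ε ≤ xp - xm := by
  by_contra h
  push_neg at h
  have hanti : StrictAntiOn f (Set.Icc xm xp) := by
    apply strictAntiOn_of_deriv_neg (convex_Icc xm xp)
      (hf.continuous.continuousOn)
    intro x hxmem
    rw [interior_Icc] at hxmem
    have hd : dist (deriv f x) (deriv f xm) ≤ dist x xm := by
      simpa using hlip.dist_le_mul x xm
    rw [Real.dist_eq, Real.dist_eq] at hd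
    have h1 : |x - xm| < ε := by
      rw [abs_of_pos (by linarith [hxmem.1])]
      linarith [hxmem.2]
    have := le_abs_self (deriv f x - deriv f xm)
    linarith
  have := hanti (Set.left_mem_Icc.mpr hx.le) (Set.right_mem_Icc.mpr hx.le) hx
  linarith
end

section
/- Let f : ℝ → ℝ be continuously differentiable with 1-Lipschitz derivative f', let ε > 0, and let x_- < x_+ be real numbers with f'(x_-) ≤ -ε and 0 ≤ f(x_-) - f(x_+) ≤ (ε/4)·(x_+ - x_-). Then there exists x ∈ [x_-, x_+] such that |f'(x)| ≤ ε/2. -/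
open Set

/-- Mean value theorem followed by Darboux's theorem on `[a, c]`, where `f' c` is the slope. -/
theorem exists_deriv_eq_of_deriv_le_of_le_slope {f : ℝ → ℝ} (hf : Differentiable ℝ f)
    {a b m : ℝ} (hab : a < b) (ham : deriv f a ≤ m) (hmb : m ≤ slope f a b) :
    ∃ x ∈ Icc a b, deriv f x = m := by
  obtain ⟨c, ⟨hac, hcb⟩, hc⟩ := exists_deriv_eq_slope' f hab hf.continuous.continuousOn
    hf.differentiableOn
  have hdarboux : OrdConnected (deriv f '' Icc a c) :=
    ordConnected_Icc.image_deriv fun x _ => hf x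
  obtain ⟨x, hx, hxm⟩ := hdarboux.out (mem_image_of_mem _ (left_mem_Icc.2 hac.le))
    (mem_image_of_mem _ (right_mem_Icc.2 hac.le)) ⟨ham, hc ▸ hmb⟩
  exact ⟨x, Icc_subset_Icc_right hcb.le hx, hxm⟩

theorem binary_search_ii_stationary_general (f : ℝ → ℝ) (hf : ContDiff ℝ 1 f)
    (ε : ℝ) (hε : 0 < ε)
    (xm xp : ℝ) (hx : xm < xp) (h₀ : deriv f xm ≤ -ε)
    (h₂ : f xm - f xp ≤ (ε / 4) * (xp - xm)) :
    ∃ x ∈ Set.Icc xm xp, |deriv f x| ≤ ε / 2 := by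
  have hslope : -(ε / 4) ≤ slope f xm xp := by
    rw [slope_def_field, le_div_iff₀ (sub_pos.2 hx)]
    linarith
  obtain ⟨x, hxI, hfx⟩ := exists_deriv_eq_of_deriv_le_of_le_slope
    (hf.differentiable one_ne_zero) hx (m := -(ε / 2)) (by linarith) (by linarith)
  exact ⟨x, hxI, by rw [hfx, abs_neg, abs_of_pos (half_pos hε)]⟩

theorem binary_search_ii_stationary (f : ℝ → ℝ) (hf : ContDiff ℝ 1 f)
    (hlip : LipschitzWith 1 (deriv f)) (ε : ℝ) (hε : 0 < ε)
    (xm xp : ℝ) (hx : xm < xp) (h₀ : deriv f xm ≤ -ε)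
    (h₁ : 0 ≤ f xm - f xp) (h₂ : f xm - f xp ≤ (ε / 4) * (xp - xm)) :
    ∃ x ∈ Set.Icc xm xp, |deriv f x| ≤ ε / 2 :=
  binary_search_ii_stationary_general f hf ε hε xm xp hx h₀ h₂
end

section
/- Let f : ℝ → ℝ be continuously differentiable with 1-Lipschitz derivative f', let ε > 0, and let x_- < x_+ be real numbers with f'(x_-) ≤ -ε and 0 ≤ f(x_-) - f(x_+) ≤ (ε/4)·(x_+ - x_-). Then x_+ - x_- ≥ ε/2. -/
open scoped NNReal

theorem slope_le_deriv_add_of_lipschitzWith_deriv {f : ℝ → ℝ} {K : ℝ≥0}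
    (hf : Differentiable ℝ f) (hlip : LipschitzWith K (deriv f)) {a b : ℝ} (hab : a < b) :
    (f b - f a) / (b - a) ≤ deriv f a + K * (b - a) := by
  obtain ⟨c, ⟨hac, hcb⟩, hc⟩ :=
    exists_deriv_eq_slope f hab hf.continuous.continuousOn fun x _ => (hf x).differentiableWithinAt
  have hdist : |deriv f c - deriv f a| ≤ K * |c - a| := by
    simpa only [Real.dist_eq] using hlip.dist_le_mul c a
  rw [abs_of_pos (sub_pos.mpr hac)] at hdist
  rw [← hc]
  calc deriv f c ≤ deriv f a + K * (c - a) := by linarith [(abs_le.mp hdist).2]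
    _ ≤ deriv f a + K * (b - a) := by gcongr

theorem binary_search_ii_gap_general (f : ℝ → ℝ) (hf : ContDiff ℝ 1 f)
    (hlip : LipschitzWith 1 (deriv f)) (ε : ℝ) (hε : 0 < ε)
    (xm xp : ℝ) (hx : xm < xp) (h₀ : deriv f xm ≤ -ε)
    (h₂ : f xm - f xp ≤ (ε / 4) * (xp - xm)) :
    ε / 2 ≤ xp - xm := by
  have hlen : 0 < xp - xm := sub_pos.mpr hx
  have hslope_upper := slope_le_deriv_add_of_lipschitzWith_deriv
    (hf.differentiable one_ne_zero) hlip hx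
  have hslope_lower : -(ε / 4) ≤ (f xp - f xm) / (xp - xm) := by
    rw [le_div_iff₀ hlen]
    linarith
  push_cast at hslope_upper
  -- the slope lies in `[-ε/4, -ε + (xp - xm)]`, so in fact `xp - xm ≥ 3ε/4`
  linarith [hε]

theorem binary_search_ii_gap (f : ℝ → ℝ) (hf : ContDiff ℝ 1 f)
    (hlip : LipschitzWith 1 (deriv f)) (ε : ℝ) (hε : 0 < ε)
    (xm xp : ℝ) (hx : xm < xp) (h₀ : deriv f xm ≤ -ε)
    (h₁ : 0 ≤ f xm - f xp) (h₂ : f xm - f xp ≤ (ε / 4) * (xp - xm)) :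
    ε / 2 ≤ xp - xm :=
  binary_search_ii_gap_general f hf hlip ε hε xm xp hx h₀ h₂
end

section
/- There exist universal constants c₀ > 0 and C > 0 such that the following holds: for every ε ∈ (0, 1], every function f : ℝ → ℝ that is continuously differentiable with 1-Lipschitz derivative f', satisfies f ≥ 0 on ℝ, and f(0) = 1, and every integer N ≥ C/ε, if X_1, ..., X_N are independent random variables each uniformly distributed on the interval [0, 2/ε], then with probability at least 1/2 there exists i ∈ {1, ..., N} with f'(X_i) > -ε. -/
/-!
Put `L = 2/ε` and let `B = {x ∈ [0, L] | f' x ≤ -ε}`. Then `|B| ≤ L - 1/2`: if `f' > 1` somewhere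
in `[0, L]`, then, being 1-Lipschitz, `f'` stays positive on a subinterval of length `1/2`;
otherwise `f' ≤ 1` on `[0, L]`, and `-1 ≤ f L - f 0 = ∫₀ᴸ f' ≤ (L - |B|) - ε |B|` with `εL = 2`
and `ε ≤ 1` forces `|B| ≤ L - 1/2`. So each `X i` lands in `B` with probability at most
`1 - ε/4`, and by independence all of them do with probability at most
`(1 - ε/4)^N ≤ exp (-εN/4) ≤ exp (-1) < 1/2` once `N ≥ 4/ε`.
-/

open MeasureTheory Set ProbabilityTheory

lemma one_sub_pow_le_half {p : ℝ} {n : ℕ} (hp : p ≤ 1) (hpn : 1 ≤ p * n) :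
    (1 - p) ^ n ≤ 1 / 2 :=
  calc (1 - p) ^ n ≤ Real.exp (-p) ^ n :=
        pow_le_pow_left₀ (by linarith) (by linarith [Real.add_one_le_exp (-p)]) n
    _ = Real.exp (-(p * n)) := by rw [← Real.exp_nat_mul]; ring_nf
    _ ≤ Real.exp (-1) := Real.exp_le_exp.2 (by linarith)
    _ ≤ 1 / 2 := Real.exp_neg_one_lt_half.le

lemma ProbabilityTheory.iIndepFun.one_sub_pow_le_measure_exists_notMem {Ω ι β : Type*}
    [MeasurableSpace Ω] {μ : Measure Ω} [IsProbabilityMeasure μ] [Fintype ι] [MeasurableSpace β]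
    {X : ι → Ω → β} (hX : iIndepFun X μ) (hXm : ∀ i, Measurable (X i)) {B : Set β}
    (hB : MeasurableSet B) {q : ENNReal} (hq : ∀ i, μ (X i ⁻¹' B) ≤ q) :
    1 - q ^ Fintype.card ι ≤ μ {ω | ∃ i, X i ω ∉ B} := by
  have hall : μ (⋂ i, X i ⁻¹' B) ≤ q ^ Fintype.card ι := by
    rw [hX.meas_iInter fun i => ⟨B, hB, rfl⟩]
    exact Finset.prod_le_pow_card _ _ _ fun i _ => hq i
  have hcompl : {ω | ∃ i, X i ω ∉ B} = (⋂ i, X i ⁻¹' B)ᶜ := by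
    ext ω
    simp
  rw [hcompl, prob_compl_eq_one_sub (.iInter fun i => hXm i hB)]
  exact tsub_le_tsub_left hall 1

lemma measure_preimage_le_of_isUniform_Icc {Ω : Type*} [MeasurableSpace Ω] {μ : Measure Ω}
    {X : Ω → ℝ} {L r : ℝ} (hL : 0 < L) (hX : pdf.IsUniform X (Icc 0 L) μ) {B : Set ℝ}
    (hB : MeasurableSet B) (hBvol : volume (Icc 0 L ∩ B) ≤ ENNReal.ofReal (L - r)) :
    μ (X ⁻¹' B) ≤ ENNReal.ofReal (1 - r / L) := by
  have hvol : volume (Icc 0 L) = ENNReal.ofReal L := by rw [Real.volume_Icc, sub_zero]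
  rw [hX.measure_preimage (by simp [hvol, hL]) (by simp [hvol]) hB, hvol]
  calc volume (Icc 0 L ∩ B) / ENNReal.ofReal L
      ≤ ENNReal.ofReal (L - r) / ENNReal.ofReal L := by gcongr
    _ = ENNReal.ofReal (1 - r / L) := by
        rw [← ENNReal.ofReal_div_of_pos hL, sub_div, div_self hL.ne']

lemma mul_measureReal_inter_sublevel_le {α : Type*} [MeasurableSpace α] {μ : Measure α}
    {g : α → ℝ} {s : Set α} {M t : ℝ} (hs : MeasurableSet s) (hμs : μ s ≠ ⊤)
    (hg : IntegrableOn g s μ) (hB : MeasurableSet {x | g x ≤ t}) (hgM : ∀ x ∈ s, g x ≤ M) :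
    (M - t) * μ.real (s ∩ {x | g x ≤ t}) ≤ M * μ.real s - ∫ x in s, g x ∂μ := by
  set B := {x | g x ≤ t}
  have hμB : μ (s ∩ B) ≠ ⊤ := measure_ne_top_of_subset inter_subset_left hμs
  have hμG : μ (s \ B) ≠ ⊤ := measure_ne_top_of_subset sdiff_subset hμs
  have hintB : ∫ x in s ∩ B, g x ∂μ ≤ t * μ.real (s ∩ B) := by
    simpa [mul_comm] using setIntegral_mono_on (hg.mono_set inter_subset_left)
      (integrableOn_const hμB) (hs.inter hB) fun x hx => hx.2
  have hintG : ∫ x in s \ B, g x ∂μ ≤ M * μ.real (s \ B) := by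
    simpa [mul_comm] using setIntegral_mono_on (hg.mono_set sdiff_subset)
      (integrableOn_const hμG) (hs.diff hB) fun x hx => hgM x hx.1
  rw [← integral_inter_add_sdiff hB hg, ← measureReal_inter_add_sdiff hB hμs]
  linarith

lemma volume_Icc_inter_sublevel_le_of_lipschitzWith {g : ℝ → ℝ} (hg : LipschitzWith 1 g)
    {L r t x₀ : ℝ} (hr : 0 ≤ r) (hrL : r ≤ L) (hx₀ : x₀ ∈ Icc 0 L) (hgx₀ : t + r < g x₀) :
    volume (Icc 0 L ∩ {x | g x ≤ t}) ≤ ENNReal.ofReal (L - r) := by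
  obtain ⟨a, ha0, haL, hnear⟩ : ∃ a, 0 ≤ a ∧ a + r ≤ L ∧ ∀ x ∈ Icc a (a + r), |x - x₀| ≤ r := by
    rcases le_total (x₀ + r) L with h | h
    · exact ⟨x₀, hx₀.1, h, fun x hx => abs_le.2 ⟨by linarith [hx.1], by linarith [hx.2]⟩⟩
    · exact ⟨L - r, by linarith, by linarith,
        fun x hx => abs_le.2 ⟨by linarith [hx.1, hx₀.2], by linarith [hx.2]⟩⟩
  have hsub : Icc 0 L ∩ {x | g x ≤ t} ⊆ Icc 0 L \ Icc a (a + r) := by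
    rintro x ⟨hxL, hxt⟩
    refine ⟨hxL, fun hx => ?_⟩
    have hgx : |g x - g x₀| ≤ |x - x₀| := by simpa [Real.dist_eq] using hg.dist_le_mul x x₀
    linarith [(abs_le.1 hgx).1, hnear x hx, show g x ≤ t from hxt]
  calc volume (Icc 0 L ∩ {x | g x ≤ t}) ≤ volume (Icc 0 L \ Icc a (a + r)) := measure_mono hsub
    _ = ENNReal.ofReal (L - r) := by
      rw [measure_sdiff (Icc_subset_Icc ha0 haL) measurableSet_Icc.nullMeasurableSet
        measure_Icc_lt_top.ne, Real.volume_Icc, Real.volume_Icc, sub_zero,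
        add_sub_cancel_left, ← ENNReal.ofReal_sub _ hr]

lemma volume_Icc_inter_deriv_le_neg_le {f : ℝ → ℝ} (hf : Differentiable ℝ f)
    (hf' : LipschitzWith 1 (deriv f)) (hpos : ∀ x, 0 ≤ f x) (hf0 : f 0 = 1) {ε : ℝ}
    (hε0 : 0 < ε) (hε1 : ε ≤ 1) :
    volume (Icc 0 (2 / ε) ∩ {x | deriv f x ≤ -ε}) ≤ ENNReal.ofReal (2 / ε - 1 / 2) := by
  set L := 2 / ε
  have hεL : ε * L = 2 := by simp only [L]; field_simp
  have hL : 2 ≤ L := by rw [le_div_iff₀ hε0]; linarith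
  by_cases hbig : ∃ x₀ ∈ Icc 0 L, 1 < deriv f x₀
  · obtain ⟨x₀, hx₀, hfx₀⟩ := hbig
    exact volume_Icc_inter_sublevel_le_of_lipschitzWith hf' (by norm_num) (by linarith) hx₀
      (by linarith)
  push Not at hbig
  have hB : MeasurableSet {x | deriv f x ≤ -ε} :=
    measurableSet_le hf'.continuous.measurable measurable_const
  have hftc : ∫ x in Icc 0 L, deriv f x = f L - f 0 := by
    rw [integral_Icc_eq_integral_Ioc, ← intervalIntegral.integral_of_le (by linarith),
      intervalIntegral.integral_deriv_eq_sub (fun x _ => hf x)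
        (hf'.continuous.intervalIntegrable 0 L)]
  have key := mul_measureReal_inter_sublevel_le (μ := volume) measurableSet_Icc
    measure_Icc_lt_top.ne hf'.continuous.integrableOn_Icc hB hbig
  rw [hftc, hf0, Real.volume_real_Icc_of_le (by linarith)] at key
  rw [← ofReal_measureReal (measure_ne_top_of_subset inter_subset_left measure_Icc_lt_top.ne)]
  refine ENNReal.ofReal_le_ofReal ?_
  nlinarith [hpos L]

theorem random_search_succeeds :
    ∃ c₀ C : ℝ, 0 < c₀ ∧ 0 < C ∧
      ∀ ε : ℝ, ε ∈ Set.Ioc (0 : ℝ) 1 →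
        ∀ f : ℝ → ℝ, ContDiff ℝ 1 f → LipschitzWith 1 (deriv f) →
          (∀ x, 0 ≤ f x) → f 0 = 1 →
          ∀ N : ℕ, C / ε ≤ N →
            ∀ (Ω : Type) [MeasurableSpace Ω] (μ : MeasureTheory.Measure Ω),
              MeasureTheory.IsProbabilityMeasure μ →
              ∀ X : Fin N → Ω → ℝ, (∀ i, Measurable (X i)) →
                ProbabilityTheory.iIndepFun X μ →
                (∀ i, MeasureTheory.Measure.map (X i) μ =
                  (MeasureTheory.volume (Set.Icc (0 : ℝ) (2 / ε)))⁻¹ •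
                    MeasureTheory.volume.restrict (Set.Icc (0 : ℝ) (2 / ε))) →
                (1 : ENNReal) / 2 ≤ μ {ω : Ω | ∃ i : Fin N, -ε < deriv f (X i ω)} := by
  refine ⟨1, 4, one_pos, four_pos, ?_⟩
  rintro ε ⟨hε0, hε1⟩ f hf hf' hpos hf0 N hN Ω _ μ hμ X hXm hindep hX
  have hB : MeasurableSet {x | deriv f x ≤ -ε} :=
    measurableSet_le hf'.continuous.measurable measurable_const
  have hsample : ∀ i, μ (X i ⁻¹' {x | deriv f x ≤ -ε}) ≤ ENNReal.ofReal (1 - ε / 4) :=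
    fun i => (measure_preimage_le_of_isUniform_Icc (by positivity) (hX i) hB
      (volume_Icc_inter_deriv_le_neg_le (hf.differentiable one_ne_zero) hf' hpos hf0 hε0 hε1)
      ).trans_eq (by congr 1; field_simp; ring)
  have hpow : (1 - ε / 4) ^ N ≤ 1 / 2 :=
    one_sub_pow_le_half (by linarith) (by rw [div_le_iff₀ hε0] at hN; linarith)
  calc (1 : ENNReal) / 2 = 1 - ENNReal.ofReal (1 / 2) := by
        rw [ENNReal.ofReal_div_of_pos two_pos, ENNReal.ofReal_one, ENNReal.ofReal_ofNat,
          one_div, ENNReal.one_sub_inv_two]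
    _ ≤ 1 - ENNReal.ofReal (1 - ε / 4) ^ N := by
        rw [← ENNReal.ofReal_pow (by linarith)]
        gcongr
    _ ≤ μ {ω | ∃ i, X i ω ∉ {x | deriv f x ≤ -ε}} := by
        simpa using hindep.one_sub_pow_le_measure_exists_notMem hXm hB hsample
    _ = μ {ω | ∃ i, -ε < deriv f (X i ω)} := by simp
end

section
/- Let ε ∈ (0, 1/4] be such that m := 1/ε is a positive integer, and let j ∈ {1, ..., m}. Then there exists a function f : ℝ → ℝ that is continuously differentiable with 5-Lipschitz derivative f', satisfies f(0) = 1 and inf f ≥ 0 (so f(0) - inf f ≤ 1), and satisfies f'(x) = -ε for every x ∈ ℝ that does not belong to the union over k ∈ ℕ of the intervals [k/ε + j - 1, k/ε + j]. In particular, every ε-stationary point of f lies in that union of intervals. -/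
open MeasureTheory Set

noncomputable def rlbTent (a x : ℝ) : ℝ := 4 * max 0 (min (x - a) (a + 1 - x))

noncomputable def rlbB (M p x : ℝ) : ℝ := ⨆ k : ℕ, rlbTent ((k : ℝ) * M + p) x

noncomputable def rlbF (ε M p x : ℝ) : ℝ := 1 - ε * x + ∫ t in (0:ℝ)..x, rlbB M p t

lemma rlbTent_nonneg (a x : ℝ) : 0 ≤ rlbTent a x := by
  have h : (0:ℝ) ≤ max 0 (min (x - a) (a + 1 - x)) := le_max_left _ _
  unfold rlbTent; linarith

lemma rlbTent_le_two (a x : ℝ) : rlbTent a x ≤ 2 := by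
  unfold rlbTent
  have h1 : max 0 (min (x - a) (a + 1 - x)) ≤ 1/2 := by
    apply max_le (by norm_num)
    rcases le_total (x - a) (a + 1 - x) with h | h
    · rw [min_eq_left h]; linarith
    · rw [min_eq_right h]; linarith
  linarith

lemma rlbTent_eq_zero {a x : ℝ} (h : x ≤ a ∨ a + 1 ≤ x) : rlbTent a x = 0 := by
  unfold rlbTent
  have hmin : min (x - a) (a + 1 - x) ≤ 0 := by
    rcases h with h | h
    · exact le_trans (min_le_left _ _) (by linarith)
    · exact le_trans (min_le_right _ _) (by linarith)
  rw [max_eq_left hmin, mul_zero]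

lemma lip_of_abs {K : NNReal} {f : ℝ → ℝ} (h : ∀ x y, |f x - f y| ≤ (K : ℝ) * |x - y|) :
    LipschitzWith K f :=
  LipschitzWith.of_dist_le_mul fun x y => by simpa [Real.dist_eq] using h x y

lemma rlbTent_abs_sub (a x y : ℝ) : |rlbTent a x - rlbTent a y| ≤ 4 * |x - y| := by
  have h1 : |max 0 (min (x - a) (a + 1 - x)) - max 0 (min (y - a) (a + 1 - y))|
      ≤ |x - y| := by
    calc |max 0 (min (x - a) (a + 1 - x)) - max 0 (min (y - a) (a + 1 - y))|
        ≤ max |(0:ℝ) - 0| |min (x - a) (a + 1 - x) - min (y - a) (a + 1 - y)| :=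
          abs_max_sub_max_le_max _ _ _ _
      _ ≤ max |(0:ℝ) - 0| (max |(x - a) - (y - a)| |(a + 1 - x) - (a + 1 - y)|) :=
          max_le_max le_rfl (abs_min_sub_min_le_max _ _ _ _)
      _ ≤ |x - y| := by
          apply max_le (by simp)
          apply max_le
          · apply le_of_eq; congr 1; ring
          · rw [show (a + 1 - x) - (a + 1 - y) = -(x - y) by ring, abs_neg]
  have h2 : rlbTent a x - rlbTent a y
      = 4 * (max 0 (min (x - a) (a + 1 - x)) - max 0 (min (y - a) (a + 1 - y))) := by
    unfold rlbTent; ring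
  rw [h2, abs_mul, abs_of_nonneg (by norm_num : (0:ℝ) ≤ 4)]
  linarith

lemma coe_four : ((4 : NNReal) : ℝ) = 4 := by norm_num

lemma rlbTent_lip (a : ℝ) : LipschitzWith 4 (rlbTent a) := by
  apply lip_of_abs
  intro x y
  rw [coe_four]
  exact rlbTent_abs_sub a x y

lemma rlbB_bdd (M p x : ℝ) : BddAbove (Set.range fun k : ℕ => rlbTent ((k:ℝ)*M + p) x) := by
  refine ⟨2, ?_⟩
  rintro _ ⟨k, rfl⟩
  exact rlbTent_le_two _ _

lemma rlbB_nonneg (M p x : ℝ) : 0 ≤ rlbB M p x :=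
  le_trans (rlbTent_nonneg (((0:ℕ):ℝ) * M + p) x) (le_ciSup (rlbB_bdd M p x) 0)

lemma rlbB_eq_tent {M p x : ℝ} (k : ℕ)
    (h : ∀ l : ℕ, l ≠ k → rlbTent ((l:ℝ)*M + p) x = 0) :
    rlbB M p x = rlbTent ((k:ℝ)*M + p) x := by
  apply le_antisymm
  · apply ciSup_le
    intro l
    by_cases hl : l = k
    · subst hl; exact le_rfl
    · rw [h l hl]; exact rlbTent_nonneg _ _
  · exact le_ciSup (rlbB_bdd M p x) k

lemma rlbB_eq_zero {M p x : ℝ} (h : ∀ k : ℕ, rlbTent ((k:ℝ)*M + p) x = 0) :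
    rlbB M p x = 0 := by
  rw [rlbB_eq_tent 0 (fun l _ => h l), h 0]

lemma rlbB_le_add (M p x y : ℝ) : rlbB M p x ≤ rlbB M p y + 4 * |x - y| := by
  apply ciSup_le
  intro k
  have h1 := rlbTent_abs_sub ((k:ℝ)*M + p) x y
  have h2 : rlbTent ((k:ℝ)*M + p) y ≤ rlbB M p y := le_ciSup (rlbB_bdd M p y) k
  have h3 := le_abs_self (rlbTent ((k:ℝ)*M + p) x - rlbTent ((k:ℝ)*M + p) y)
  linarith

lemma rlbB_lip (M p : ℝ) : LipschitzWith 4 (rlbB M p) := by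
  apply lip_of_abs
  intro x y
  rw [coe_four, abs_sub_le_iff]
  have h1 := rlbB_le_add M p x y
  have h2 := rlbB_le_add M p y x
  rw [abs_sub_comm y x] at h2
  constructor <;> linarith

lemma rlbB_bump {M p : ℝ} (hM : 1 ≤ M) (k : ℕ) {x : ℝ} (h1 : (k:ℝ)*M + p ≤ x)
    (h2 : x ≤ (k:ℝ)*M + p + 1) : rlbB M p x = rlbTent ((k:ℝ)*M + p) x := by
  apply rlbB_eq_tent
  intro l hl
  apply rlbTent_eq_zero
  rcases lt_or_gt_of_ne hl with h | h
  · right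
    have hc : (l:ℝ) + 1 ≤ k := by exact_mod_cast h
    nlinarith
  · left
    have hc : (k:ℝ) + 1 ≤ l := by exact_mod_cast h
    nlinarith

lemma rlbB_gap {M p : ℝ} (hM : 1 ≤ M) (k : ℕ) {x : ℝ} (h1 : (k:ℝ)*M + p + 1 ≤ x)
    (h2 : x ≤ ((k:ℝ)+1)*M + p) : rlbB M p x = 0 := by
  apply rlbB_eq_zero
  intro l
  apply rlbTent_eq_zero
  rcases le_or_gt l k with h | h
  · right
    have hc : (l:ℝ) ≤ k := by exact_mod_cast h
    nlinarith
  · left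
    have hc : (k:ℝ) + 1 ≤ l := by exact_mod_cast h
    nlinarith

lemma rlbB_left {M p : ℝ} (hM : 0 ≤ M) {x : ℝ} (hx : x ≤ p) : rlbB M p x = 0 := by
  apply rlbB_eq_zero
  intro l
  apply rlbTent_eq_zero
  left
  have : (0:ℝ) ≤ (l:ℝ) * M := mul_nonneg (Nat.cast_nonneg l) hM
  linarith

lemma rlbB_intble (M p a b : ℝ) : IntervalIntegrable (rlbB M p) volume a b :=
  ((rlbB_lip M p).continuous).intervalIntegrable _ _

lemma integral_ramp_up (a b c : ℝ) :
    ∫ t in a..b, 4*(t - c) = 2*(b^2 - a^2) - 4*c*(b - a) := by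
  rw [intervalIntegral.integral_const_mul,
    intervalIntegral.integral_sub intervalIntegral.intervalIntegrable_id
      intervalIntegrable_const,
    integral_id, intervalIntegral.integral_const, smul_eq_mul]
  ring

lemma integral_ramp_down (a b c : ℝ) :
    ∫ t in a..b, 4*(c - t) = 4*c*(b - a) - 2*(b^2 - a^2) := by
  rw [intervalIntegral.integral_const_mul,
    intervalIntegral.integral_sub intervalIntegrable_const
      intervalIntegral.intervalIntegrable_id,
    integral_id, intervalIntegral.integral_const, smul_eq_mul]
  ring

lemma rlbB_integral_bump {M p : ℝ} (hM : 1 ≤ M) (k : ℕ) :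
    ∫ t in ((k:ℝ)*M + p)..((k:ℝ)*M + p + M), rlbB M p t = 1 := by
  set a : ℝ := (k:ℝ)*M + p with ha
  have i1 : ∫ t in a..(a + 1/2), rlbB M p t = 1/2 := by
    have he : EqOn (rlbB M p) (fun t => 4*(t - a)) (uIcc a (a + 1/2)) := by
      intro t ht
      rw [uIcc_of_le (by linarith)] at ht
      obtain ⟨ht1, ht2⟩ := ht
      have hb := rlbB_bump hM k (x := t) (by rw [← ha]; exact ht1) (by rw [← ha]; linarith)
      rw [← ha] at hb
      rw [hb]
      unfold rlbTent
      rw [min_eq_left (by linarith), max_eq_right (by linarith)]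
    rw [intervalIntegral.integral_congr he, integral_ramp_up]
    ring
  have i2 : ∫ t in (a + 1/2)..(a + 1), rlbB M p t = 1/2 := by
    have he : EqOn (rlbB M p) (fun t => 4*((a + 1) - t)) (uIcc (a + 1/2) (a + 1)) := by
      intro t ht
      rw [uIcc_of_le (by linarith)] at ht
      obtain ⟨ht1, ht2⟩ := ht
      have hb := rlbB_bump hM k (x := t) (by rw [← ha]; linarith) (by rw [← ha]; linarith)
      rw [← ha] at hb
      rw [hb]
      unfold rlbTent
      rw [min_eq_right (by linarith), max_eq_right (by linarith)]
    rw [intervalIntegral.integral_congr he, integral_ramp_down]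
    ring
  have i3 : ∫ t in (a + 1)..(a + M), rlbB M p t = 0 := by
    have he : EqOn (rlbB M p) (fun _ => (0:ℝ)) (uIcc (a + 1) (a + M)) := by
      intro t ht
      rw [uIcc_of_le (by linarith)] at ht
      obtain ⟨ht1, ht2⟩ := ht
      apply rlbB_gap hM k (x := t) (by rw [← ha]; linarith)
      rw [show ((k:ℝ)+1)*M + p = a + M by rw [ha]; ring]
      exact ht2
    rw [intervalIntegral.integral_congr he]
    simp
  have hadd1 := intervalIntegral.integral_add_adjacent_intervals
    (rlbB_intble M p a (a + 1/2)) (rlbB_intble M p (a + 1/2) (a + 1))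
  have hadd2 := intervalIntegral.integral_add_adjacent_intervals
    (rlbB_intble M p a (a + 1)) (rlbB_intble M p (a + 1) (a + M))
  rw [← hadd2, ← hadd1, i1, i2, i3]
  norm_num

lemma rlbF_hasDeriv (ε M p x : ℝ) : HasDerivAt (rlbF ε M p) (-ε + rlbB M p x) x := by
  have h1 : HasDerivAt (fun y : ℝ => 1 - ε * y) (-ε) x := by
    simpa using ((hasDerivAt_id x).const_mul ε).const_sub 1
  have h2 : HasDerivAt (fun y : ℝ => ∫ t in (0:ℝ)..y, rlbB M p t) (rlbB M p x) x :=
    intervalIntegral.integral_hasDerivAt_right (rlbB_intble M p 0 x)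
      ((rlbB_lip M p).continuous.stronglyMeasurableAtFilter _ _)
      (rlbB_lip M p).continuous.continuousAt
  exact h1.add h2

lemma rlbF_diff (ε M p x y : ℝ) :
    rlbF ε M p y = rlbF ε M p x - ε*(y - x) + ∫ t in x..y, rlbB M p t := by
  have h := intervalIntegral.integral_add_adjacent_intervals
    (rlbB_intble M p 0 x) (rlbB_intble M p x y)
  have hr : ε * (y - x) = ε * y - ε * x := by ring
  unfold rlbF
  linarith

theorem randomized_lower_bound_construction (ε : ℝ) (hε : ε ∈ Set.Ioc (0 : ℝ) (1 / 4))
    (m : ℕ) (hm : 1 ≤ m) (hmε : (m : ℝ) = 1 / ε)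
    (j : ℕ) (hj1 : 1 ≤ j) (hjm : j ≤ m) :
    ∃ f : ℝ → ℝ, ContDiff ℝ 1 f ∧ LipschitzWith 5 (deriv f) ∧
      f 0 = 1 ∧ (∀ x, 0 ≤ f x) ∧
      (∀ x : ℝ, x ∉ (⋃ k : ℕ, Set.Icc ((k : ℝ) / ε + j - 1) ((k : ℝ) / ε + j)) →
        deriv f x = -ε) ∧
      (∀ x : ℝ, |deriv f x| < ε →
        x ∈ ⋃ k : ℕ, Set.Icc ((k : ℝ) / ε + j - 1) ((k : ℝ) / ε + j)) := by
  obtain ⟨hε0, hε4⟩ := hε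
  obtain ⟨M, hMdef⟩ : ∃ M : ℝ, M = (m : ℝ) := ⟨_, rfl⟩
  obtain ⟨p, hpdef⟩ : ∃ p : ℝ, p = (j : ℝ) - 1 := ⟨_, rfl⟩
  have hMε : M = 1 / ε := hMdef.trans hmε
  have hM1 : 1 ≤ M := by rw [hMdef]; exact_mod_cast hm
  have hεM : ε * M = 1 := by rw [hMε]; field_simp
  have hp0 : 0 ≤ p := by
    have : (1:ℝ) ≤ (j:ℝ) := by exact_mod_cast hj1
    rw [hpdef]; linarith
  have hpM : p ≤ M - 1 := by
    have : (j:ℝ) ≤ (m:ℝ) := by exact_mod_cast hjm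
    rw [hpdef, hMdef]; linarith
  have hkey : ∀ k : ℕ, (k:ℝ)*M + p = (k:ℝ)/ε + (j:ℝ) - 1 := by
    intro k
    have h : (k:ℝ)*M = (k:ℝ)/ε := by rw [hMε, mul_one_div]
    rw [h, hpdef]; ring
  have hd : deriv (rlbF ε M p) = fun x => -ε + rlbB M p x :=
    funext fun x => (rlbF_hasDeriv ε M p x).deriv
  have hBzero : ∀ x : ℝ,
      x ∉ (⋃ k : ℕ, Set.Icc ((k : ℝ) / ε + j - 1) ((k : ℝ) / ε + j)) →
      rlbB M p x = 0 := by
    intro x hx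
    apply rlbB_eq_zero
    intro k
    apply rlbTent_eq_zero
    simp only [Set.mem_iUnion, Set.mem_Icc, not_exists, not_and_or, not_le] at hx
    rcases hx k with h | h
    · left; rw [hkey k]; linarith
    · right; rw [hkey k]; linarith
  refine ⟨rlbF ε M p, ?_, ?_, ?_, ?_, ?_, ?_⟩
  · rw [contDiff_one_iff_deriv]
    refine ⟨fun x => (rlbF_hasDeriv ε M p x).differentiableAt, ?_⟩
    rw [hd]
    exact continuous_const.add (rlbB_lip M p).continuous
  · rw [hd]
    have h4 : LipschitzWith 4 (fun x => -ε + rlbB M p x) := by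
      apply lip_of_abs
      intro x y
      rw [coe_four]
      have h1 := rlbB_le_add M p x y
      have h2 := rlbB_le_add M p y x
      rw [abs_sub_comm y x] at h2
      have hss : -ε + rlbB M p x - (-ε + rlbB M p y) = rlbB M p x - rlbB M p y := by ring
      rw [hss, abs_sub_le_iff]
      constructor <;> linarith
    exact h4.weaken (by norm_num)
  · unfold rlbF
    simp
  · -- nonnegativity
    have hzero_left : ∀ x : ℝ, x ≤ p → (∫ t in (0:ℝ)..x, rlbB M p t) = 0 := by
      intro x hx
      have he : EqOn (rlbB M p) (fun _ => (0:ℝ)) (uIcc 0 x) := by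
        intro t ht
        rcases Set.mem_uIcc.mp ht with ⟨_, h2⟩ | ⟨_, h2⟩
        · exact rlbB_left (by linarith) (le_trans h2 hx)
        · exact rlbB_left (by linarith) (le_trans h2 hp0)
      rw [intervalIntegral.integral_congr he]
      simp
    have anchor : ∀ k : ℕ, rlbF ε M p ((k:ℝ)*M + p) = 1 - ε * p := by
      intro k
      induction k with
      | zero =>
        rw [show ((0:ℕ):ℝ)*M + p = p by push_cast; ring]
        unfold rlbF
        rw [hzero_left p le_rfl]
        ring
      | succ k ih =>
        have hdiff := rlbF_diff ε M p ((k:ℝ)*M + p) ((k:ℝ)*M + p + M)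
        rw [rlbB_integral_bump hM1 k] at hdiff
        have hc : ((k+1:ℕ):ℝ)*M + p = (k:ℝ)*M + p + M := by push_cast; ring
        rw [hc, hdiff, ih]
        have h5 : ε * ((k:ℝ)*M + p + M - ((k:ℝ)*M + p)) = ε * M := by ring
        rw [h5, hεM]
        ring
    intro x
    rcases le_or_gt x p with hx | hx
    · have h0 : rlbF ε M p x = 1 - ε * x := by
        unfold rlbF
        rw [hzero_left x hx]
        ring
      rw [h0]
      have h1 : ε * x ≤ ε * p := mul_le_mul_of_nonneg_left hx hε0.le
      have h2 : ε * p ≤ ε * (M - 1) := mul_le_mul_of_nonneg_left hpM hε0.le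
      have h3 : ε * (M - 1) = 1 - ε := by rw [mul_sub, hεM]; ring
      linarith
    · have hM0 : 0 < M := by linarith
      set n : ℕ := ⌊(x - p)/M⌋₊ with hn
      have hxp : 0 ≤ (x - p)/M := div_nonneg (by linarith) hM0.le
      have h1 : (n:ℝ) ≤ (x - p)/M := Nat.floor_le hxp
      have h2 : (x - p)/M < (n:ℝ) + 1 := Nat.lt_floor_add_one _
      have ha1 : (n:ℝ)*M + p ≤ x := by
        have := (le_div_iff₀ hM0).mp h1
        linarith
      have ha2 : x < (n:ℝ)*M + p + M := by
        have h3 := (div_lt_iff₀ hM0).mp h2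
        have hexp : ((n:ℝ)+1)*M = (n:ℝ)*M + M := by ring
        linarith
      rcases le_or_gt x ((n:ℝ)*M + p + 1) with hx2 | hx2
      · have hdiff := rlbF_diff ε M p ((n:ℝ)*M + p) x
        have hint : 0 ≤ ∫ t in ((n:ℝ)*M + p)..x, rlbB M p t :=
          intervalIntegral.integral_nonneg ha1 (fun u _ => rlbB_nonneg M p u)
        rw [hdiff, anchor n]
        have hb1 : ε * (x - ((n:ℝ)*M + p)) ≤ ε * 1 :=
          mul_le_mul_of_nonneg_left (by linarith) hε0.le
        have hb2 : ε * p ≤ ε * (M - 1) := mul_le_mul_of_nonneg_left hpM hε0.le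
        have hb3 : ε * (M - 1) = 1 - ε := by rw [mul_sub, hεM]; ring
        have hb4 : ε * 1 = ε := mul_one ε
        linarith
      · have hdiff := rlbF_diff ε M p ((n:ℝ)*M + p + M) x
        have hint : ∫ t in ((n:ℝ)*M + p + M)..x, rlbB M p t = 0 := by
          have he : EqOn (rlbB M p) (fun _ => (0:ℝ)) (uIcc ((n:ℝ)*M + p + M) x) := by
            intro t ht
            rw [uIcc_of_ge (le_of_lt ha2)] at ht
            obtain ⟨ht1, ht2⟩ := ht
            apply rlbB_gap hM1 n (x := t) (by linarith)
            rw [show ((n:ℝ)+1)*M + p = (n:ℝ)*M + p + M by ring]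
            exact ht2
          rw [intervalIntegral.integral_congr he]
          simp
        have hc : ((n+1:ℕ):ℝ)*M + p = (n:ℝ)*M + p + M := by push_cast; ring
        have hF : rlbF ε M p ((n:ℝ)*M + p + M) = 1 - ε * p := by
          rw [← hc]; exact anchor (n+1)
        rw [hdiff, hint, hF]
        have hb1 : 0 ≤ ε * (((n:ℝ)*M + p + M) - x) :=
          mul_nonneg hε0.le (by linarith)
        have hb0 : ε * (x - ((n:ℝ)*M + p + M)) + ε * (((n:ℝ)*M + p + M) - x) = 0 := by
          ring
        have hb2 : ε * p ≤ ε * (M - 1) := mul_le_mul_of_nonneg_left hpM hε0.le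
        have hb3 : ε * (M - 1) = 1 - ε := by rw [mul_sub, hεM]; ring
        linarith
  · intro x hx
    rw [hd]
    show -ε + rlbB M p x = -ε
    rw [hBzero x hx]
    ring
  · intro x hx
    by_contra hmem
    rw [hd] at hx
    have hx2 : |-ε + rlbB M p x| < ε := hx
    rw [hBzero x hmem, add_zero, abs_neg, abs_of_pos hε0] at hx2
    exact lt_irrefl _ hx2
end

section
/- Let ε ∈ (0, 1), let N be a positive integer with N ≤ 1/(32ε²), and let x_1 < x_2 < ... < x_N be real numbers in the open interval (0, 1/ε). Then there exists a function f : ℝ → ℝ that is continuously differentiable with 1-Lipschitz derivative f', satisfies f(0) = 1 and inf f ≥ 0 (so f(0) - inf f ≤ 1), and satisfies f'(x_i) = -ε for every i ∈ {1, ..., N}. In particular, none of the query points x_1, ..., x_N is an ε-stationary point of f. -/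
/-! The derivative is `-tent`, where `tent y = max (ε - dist(y, S)) 0` for the set `S` of query
points: it is 1-Lipschitz and equals `-ε` on `S`. Since `tent ≤ ε` and `tent` vanishes outside the
`ε`-neighbourhood of `S`, its total mass is at most `2 N ε²`, so `f y = 1 - ∫₀ʸ tent` never drops
below `1 - 2 N ε² ≥ 0`. -/

open Metric MeasureTheory Set

noncomputable def tent (s : Set ℝ) (ε y : ℝ) : ℝ := max (ε - infDist y s) 0

lemma tent_nonneg (s : Set ℝ) (ε y : ℝ) : 0 ≤ tent s ε y := le_max_right _ _

lemma lipschitzWith_tent (s : Set ℝ) (ε : ℝ) : LipschitzWith 1 (tent s ε) := by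
  unfold tent
  simpa using ((LipschitzWith.const (α := ℝ) ε).sub (lipschitz_infDist_pt s)).max_const 0

lemma tent_of_mem {s : Set ℝ} {ε y : ℝ} (hε : 0 ≤ ε) (hy : y ∈ s) : tent s ε y = ε := by
  simp [tent, infDist_zero_of_mem hy, hε]

lemma tent_le_sum_indicator {s : Finset ℝ} (hs : s.Nonempty) {ε : ℝ} (hε : 0 ≤ ε) (y : ℝ) :
    tent s ε y ≤ ∑ a ∈ s, (Icc (a - ε) (a + ε)).indicator (fun _ => ε) y := by
  have hterm_nonneg : ∀ a ∈ s, 0 ≤ (Icc (a - ε) (a + ε)).indicator (fun _ => ε) y :=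
    fun a _ => indicator_nonneg (fun _ _ => hε) y
  by_cases hnear : infDist y s < ε
  · obtain ⟨a, ha, hya⟩ := (infDist_lt_iff (by exact_mod_cast hs)).1 hnear
    have hy : y ∈ Icc (a - ε) (a + ε) := by
      rw [Real.dist_eq, abs_lt] at hya
      constructor <;> linarith
    calc tent s ε y ≤ ε := max_le (by linarith [infDist_nonneg (x := y) (s := (s : Set ℝ))]) hε
      _ = (Icc (a - ε) (a + ε)).indicator (fun _ => ε) y := (indicator_of_mem hy (fun _ => ε)).symm
      _ ≤ _ := Finset.single_le_sum hterm_nonneg ha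
  · rw [tent, max_eq_right (by linarith)]
    exact Finset.sum_nonneg hterm_nonneg

lemma integrable_indicator_Icc_const (a ε c : ℝ) :
    Integrable ((Icc (a - ε) (a + ε)).indicator (fun _ => c)) :=
  (integrable_indicator_iff measurableSet_Icc).2 (integrableOn_const (by simp [Real.volume_Icc]))

lemma integral_sum_indicator_Icc (s : Finset ℝ) {ε : ℝ} (hε : 0 ≤ ε) :
    ∫ y, ∑ a ∈ s, (Icc (a - ε) (a + ε)).indicator (fun _ => ε) y = 2 * s.card * ε ^ 2 := by
  rw [integral_finsetSum _ fun a _ => integrable_indicator_Icc_const a ε ε]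
  have hbump : ∀ a : ℝ, ∫ y, (Icc (a - ε) (a + ε)).indicator (fun _ => ε) y = 2 * ε ^ 2 := by
    intro a
    rw [integral_indicator_const ε measurableSet_Icc, measureReal_def, Real.volume_Icc,
      ENNReal.toReal_ofReal (by linarith), smul_eq_mul]
    ring
  simp only [hbump, Finset.sum_const, nsmul_eq_mul]
  ring

lemma integrable_tent {s : Finset ℝ} (hs : s.Nonempty) {ε : ℝ} (hε : 0 ≤ ε) :
    Integrable (tent s ε) :=
  (integrable_finsetSum s fun a _ => integrable_indicator_Icc_const a ε ε).mono'
    (lipschitzWith_tent _ _).continuous.aestronglyMeasurable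
    (ae_of_all _ fun y => by
      rw [Real.norm_of_nonneg (tent_nonneg _ _ y)]
      exact tent_le_sum_indicator hs hε y)

lemma integral_tent_le {s : Finset ℝ} (hs : s.Nonempty) {ε : ℝ} (hε : 0 ≤ ε) :
    ∫ y, tent s ε y ≤ 2 * s.card * ε ^ 2 :=
  (integral_mono (integrable_tent hs hε)
    (integrable_finsetSum s fun a _ => integrable_indicator_Icc_const a ε ε)
    (tent_le_sum_indicator hs hε)).trans_eq (integral_sum_indicator_Icc s hε)

lemma intervalIntegral_le_integral_of_nonneg {h : ℝ → ℝ} (hint : Integrable h) (hnonneg : 0 ≤ h)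
    (a b : ℝ) : ∫ t in a..b, h t ≤ ∫ t, h t := by
  rcases le_total a b with hab | hba
  · rw [intervalIntegral.integral_of_le hab]
    exact setIntegral_le_integral hint (ae_of_all _ hnonneg)
  · rw [intervalIntegral.integral_of_ge hba]
    have hpart : 0 ≤ ∫ t in Ioc b a, h t :=
      setIntegral_nonneg measurableSet_Ioc fun t _ => hnonneg t
    linarith [integral_nonneg (μ := volume) hnonneg]

lemma deriv_const_sub_integral {g : ℝ → ℝ} (hg : Continuous g) (c a : ℝ) :
    deriv (fun y => c - ∫ t in a..y, g t) = -g :=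
  funext fun y => ((hg.integral_hasStrictDerivAt a y).hasDerivAt.const_sub c).deriv

lemma contDiff_one_const_sub_integral {g : ℝ → ℝ} (hg : Continuous g) (c a : ℝ) :
    ContDiff ℝ 1 (fun y => c - ∫ t in a..y, g t) :=
  contDiff_one_iff_deriv.2 ⟨fun y => ((hg.integral_hasStrictDerivAt a y).hasDerivAt.const_sub
    c).differentiableAt, deriv_const_sub_integral hg c a ▸ hg.neg⟩

theorem resisting_oracle_construction_general (ε : ℝ) (hε : ε ∈ Set.Ioo (0 : ℝ) 1)
    (N : ℕ) (hN : 1 ≤ N) (hN2 : (N : ℝ) ≤ 1 / (32 * ε ^ 2))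
    (x : Fin N → ℝ) :
    ∃ f : ℝ → ℝ, ContDiff ℝ 1 f ∧ LipschitzWith 1 (deriv f) ∧
      f 0 = 1 ∧ (∀ y, 0 ≤ f y) ∧ (∀ i, deriv f (x i) = -ε) ∧
      (∀ i, ¬ |deriv f (x i)| < ε) := by
  obtain ⟨hε0, -⟩ := hε
  set s := Finset.univ.image x
  have hs : s.Nonempty := Finset.univ_nonempty_iff.2 ⟨⟨0, hN⟩⟩ |>.image x
  have hmass : 2 * s.card * ε ^ 2 ≤ 1 := by
    have hcard : (s.card : ℝ) ≤ N := by exact_mod_cast Finset.card_image_le.trans (by simp)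
    rw [le_div_iff₀ (by positivity)] at hN2
    nlinarith
  have hcont : Continuous (tent s ε) := (lipschitzWith_tent _ _).continuous
  have hderiv := deriv_const_sub_integral hcont 1 0
  have hslope : ∀ i, deriv (fun y => 1 - ∫ t in (0 : ℝ)..y, tent s ε t) (x i) = -ε := fun i => by
    rw [hderiv, Pi.neg_apply, tent_of_mem hε0.le (by simp [s])]
  refine ⟨fun y => 1 - ∫ t in (0 : ℝ)..y, tent s ε t, contDiff_one_const_sub_integral hcont 1 0,
    hderiv ▸ (lipschitzWith_tent _ _).neg, by simp, fun y => ?_, hslope,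
    fun i => by simp [hslope, abs_of_pos hε0]⟩
  have hpartial := intervalIntegral_le_integral_of_nonneg (integrable_tent hs hε0.le)
    (tent_nonneg _ _) 0 y
  linarith [integral_tent_le hs hε0.le]

theorem resisting_oracle_construction (ε : ℝ) (hε : ε ∈ Set.Ioo (0 : ℝ) 1)
    (N : ℕ) (hN : 1 ≤ N) (hN2 : (N : ℝ) ≤ 1 / (32 * ε ^ 2))
    (x : Fin N → ℝ) (hmono : StrictMono x)
    (hx : ∀ i, x i ∈ Set.Ioo (0 : ℝ) (1 / ε)) :
    ∃ f : ℝ → ℝ, ContDiff ℝ 1 f ∧ LipschitzWith 1 (deriv f) ∧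
      f 0 = 1 ∧ (∀ y, 0 ≤ f y) ∧ (∀ i, deriv f (x i) = -ε) ∧
      (∀ i, ¬ |deriv f (x i)| < ε) :=
  resisting_oracle_construction_general ε hε N hN hN2 x
end
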